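/- arXiv:1710.06073 — 7 statements merged into one kernel-verified Lean document; each statement's English description precedes it below -/
import Mathlib

section
/- Let h : ℝ^n → ℝ be quasi-convex and continuous, X ⊆ ℝ^n closed and convex, and X* the set of minimizers of h over X, assumed nonempty. Suppose h satisfies the Hölder condition of order p > 0 with modulus L > 0 at some x* ∈ X*, i.e., |h(y) - h(x*)| ≤ L‖y - x*‖^p for all y. Then for any x ∈ X \ X* and any unit vector g in the quasi-subdifferential ∂h(x), one has h(x) - h(x*) ≤ L ⟨g, x - x*⟩^p. -/
/-!
The point `z = x* + ⟪g, x - x*⟫ • g` lies on the hyperplane through `x` orthogonal to `g`.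
Since the unit quasi-subgradient `g` never points into the open sublevel set `{h < h x}`,
continuity forces `h x ≤ h z`; and `‖z - x*‖ = ⟪g, x - x*⟫ ≥ 0`, so the Hölder bound at `x*`
gives `h z - h x* ≤ L ⟪g, x - x*⟫ ^ p`.
-/

open Filter Topology RealInnerProductSpace

section QuasiSubgradient

variable {E : Type*} [NormedAddCommGroup E] [InnerProductSpace ℝ E]

def IsQuasiSubgradient (h : E → ℝ) (x g : E) : Prop :=
  ∀ y, h y < h x → ⟪g, y - x⟫ ≤ 0

theorem IsQuasiSubgradient.inner_sub_nonneg {h : E → ℝ} {x g y : E}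
    (hg : IsQuasiSubgradient h x g) (hy : h y < h x) : 0 ≤ ⟪g, x - y⟫ := by
  have := hg y hy
  rw [← neg_sub, inner_neg_right] at this
  linarith

theorem IsQuasiSubgradient.le_of_inner_sub_nonneg {h : E → ℝ} {x g z : E}
    (hg : IsQuasiSubgradient h x g) (hg0 : g ≠ 0) (hz : ContinuousAt h z)
    (hzx : 0 ≤ ⟪g, z - x⟫) : h x ≤ h z := by
  by_contra! hlt
  -- Moving from `z` a little further along `g` stays in the open sublevel set but leaves
  -- the half-space where `g` is allowed to point.
  have hpath : Tendsto (fun t : ℝ => z + t • g) (𝓝[>] 0) (𝓝 z) :=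
    tendsto_nhdsWithin_of_tendsto_nhds (Continuous.tendsto' (by fun_prop) 0 z (by simp))
  obtain ⟨t, hsub, ht⟩ :=
    ((hz.tendsto.comp hpath).eventually (gt_mem_nhds hlt)).and self_mem_nhdsWithin |>.exists
  have hinner : ⟪g, z + t • g - x⟫ = ⟪g, z - x⟫ + t * ‖g‖ ^ 2 := by
    rw [add_sub_right_comm, inner_add_right, inner_smul_right, real_inner_self_eq_norm_sq]
  have hpos : 0 < t * ‖g‖ ^ 2 := mul_pos ht (by positivity)
  linarith [hg _ hsub]

theorem inner_add_inner_smul_sub_eq_zero {g : E} (hg : ‖g‖ = 1) (a x : E) :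
    ⟪g, a + ⟪g, x - a⟫ • g - x⟫ = 0 := by
  rw [show a + ⟪g, x - a⟫ • g - x = ⟪g, x - a⟫ • g - (x - a) by abel, inner_sub_right,
    inner_smul_right, real_inner_self_eq_norm_sq, hg]
  ring

end QuasiSubgradient

theorem stmt4_general {n : ℕ} (h : EuclideanSpace ℝ (Fin n) → ℝ)
    (hcont : Continuous h)
    (X : Set (EuclideanSpace ℝ (Fin n)))
    (p L : ℝ)
    (xstar : EuclideanSpace ℝ (Fin n))
    (hmin : ∀ y ∈ X, h xstar ≤ h y)
    (hHolder : ∀ y, |h y - h xstar| ≤ L * ‖y - xstar‖ ^ p)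
    (x : EuclideanSpace ℝ (Fin n))
    (hxnotopt : ¬ ∀ y ∈ X, h x ≤ h y)
    (g : EuclideanSpace ℝ (Fin n)) (hg : ‖g‖ = 1)
    (hgsub : ∀ y, h y < h x → (inner ℝ g (y - x) : ℝ) ≤ 0) :
    h x - h xstar ≤ L * (inner ℝ g (x - xstar) : ℝ) ^ p := by
  have hgsub : IsQuasiSubgradient h x g := hgsub
  obtain ⟨y, hyX, hyx⟩ := not_forall₂.mp hxnotopt
  have hlt : h xstar < h x := (hmin y hyX).trans_lt (not_le.mp hyx)
  set d := ⟪g, x - xstar⟫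
  have hd : 0 ≤ d := hgsub.inner_sub_nonneg hlt
  set z := xstar + d • g
  have hxz : h x ≤ h z :=
    hgsub.le_of_inner_sub_nonneg (norm_ne_zero_iff.mp (hg ▸ one_ne_zero)) hcont.continuousAt
      (inner_add_inner_smul_sub_eq_zero hg xstar x).ge
  have hzd : ‖z - xstar‖ = d := by
    rw [add_sub_cancel_left, norm_smul, hg, mul_one, Real.norm_of_nonneg hd]
  have hHz := hHolder z
  rw [hzd] at hHz
  linarith [le_abs_self (h z - h xstar)]

theorem stmt4 {n : ℕ} (h : EuclideanSpace ℝ (Fin n) → ℝ)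
    (hqc : QuasiconvexOn ℝ Set.univ h) (hcont : Continuous h)
    (X : Set (EuclideanSpace ℝ (Fin n))) (hXne : X.Nonempty)
    (hXc : IsClosed X) (hXconv : Convex ℝ X)
    (p L : ℝ) (hp : 0 < p) (hL : 0 < L)
    (xstar : EuclideanSpace ℝ (Fin n)) (hxsX : xstar ∈ X)
    (hmin : ∀ y ∈ X, h xstar ≤ h y)
    (hHolder : ∀ y, |h y - h xstar| ≤ L * ‖y - xstar‖ ^ p)
    (x : EuclideanSpace ℝ (Fin n)) (hxX : x ∈ X)
    (hxnotopt : ¬ ∀ y ∈ X, h x ≤ h y)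
    (g : EuclideanSpace ℝ (Fin n)) (hg : ‖g‖ = 1)
    (hgsub : ∀ y, h y < h x → (inner ℝ g (y - x) : ℝ) ≤ 0) :
    h x - h xstar ≤ L * (inner ℝ g (x - xstar) : ℝ) ^ p :=
  stmt4_general h hcont X p L xstar hmin hHolder x hxnotopt g hg hgsub
end

section
/- Under Assumptions 1 and 2 (common minimizer and Hölder condition of order p with moduli ≤ L_max), if {x_k} is generated by the incremental subgradient method with constant stepsize v_k ≡ v > 0, then liminf_{k→∞} f(x_k) ≤ f* + (m² v / (2 C_{p,m}))^p, where C_{p,m} = L_max^{-1/p} min{1, (2m)^{1-1/p}}. -/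
/-!
Write `s i = ((f i (z_{k,i}) - f i x*) / L) ^ (1/p)`. A unit quasi-subgradient `g` of `f i` at
`z_{k,i}` satisfies `⟪g, z_{k,i} - x*⟫ ≥ s i`: by the Hölder bound at `x*`, the points `x* + t • g`
with `0 < t < s i` lie strictly below the level `f i (z_{k,i})`, hence on the nonpositive side of
`g`. So the `i`-th inner step decreases `‖· - x*‖²` by `2 v (s i)` up to `v²`. The inner iterates
stay within `i v` of `x k`, so Hölder continuity gives
`f i (x k) - f i x* ≤ L ((s i) ^ p + (i v) ^ p)`, and a power-mean inequality for the `2m` numbers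
`s i`, `i v` turns the sum over a cycle into the basic inequality
`‖x (k+1) - x*‖² ≤ ‖x k - x*‖² - 2 v C (f (x k) - f*) ^ (1/p) + m² v²`.
If the liminf exceeded the bound, `‖x k - x*‖²` would eventually drop by a fixed amount per cycle.
-/

open Finset Real Filter
open scoped RealInnerProductSpace

theorem sum_rpow_le_rpow_sum {ι : Type*} (s : Finset ι) {w : ι → ℝ} (hw : ∀ i ∈ s, 0 ≤ w i)
    {p : ℝ} (hp : 1 ≤ p) : ∑ i ∈ s, w i ^ p ≤ (∑ i ∈ s, w i) ^ p := by
  have hsplit : ∀ t : ℝ, 0 ≤ t → t ^ p = t * t ^ (p - 1) := fun t ht => by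
    rw [← rpow_one_add' ht (by linarith), add_sub_cancel]
  calc ∑ i ∈ s, w i ^ p = ∑ i ∈ s, w i * w i ^ (p - 1) :=
        sum_congr rfl fun i hi => hsplit _ (hw i hi)
    _ ≤ ∑ i ∈ s, w i * (∑ j ∈ s, w j) ^ (p - 1) := sum_le_sum fun i hi =>
        mul_le_mul_of_nonneg_left (rpow_le_rpow (hw i hi) (single_le_sum hw hi) (by linarith))
          (hw i hi)
    _ = (∑ i ∈ s, w i) ^ p := by rw [← sum_mul, hsplit _ (sum_nonneg hw)]

theorem min_one_mul_rpow_sum_rpow_le_sum {ι : Type*} (s : Finset ι) {w : ι → ℝ}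
    (hw : ∀ i ∈ s, 0 ≤ w i) {p : ℝ} (hp : 0 < p) :
    min 1 ((#s : ℝ) ^ (1 - 1 / p)) * (∑ i ∈ s, w i ^ p) ^ (1 / p) ≤ ∑ i ∈ s, w i := by
  rcases s.eq_empty_or_nonempty with rfl | hs
  · simp [zero_rpow, hp.ne']
  have hwp : ∀ i ∈ s, 0 ≤ w i ^ p := fun i hi => rpow_nonneg (hw i hi) p
  have hroot : ∀ i ∈ s, (w i ^ p) ^ (1 / p) = w i := fun i hi => by
    rw [one_div, rpow_rpow_inv (hw i hi) hp.ne']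
  have hroot_pos : 0 ≤ (∑ i ∈ s, w i ^ p) ^ (1 / p) := rpow_nonneg (sum_nonneg hwp) _
  rcases le_total p 1 with hp1 | hp1
  · have hN : (0 : ℝ) < #s := by exact_mod_cast hs.card_pos
    calc min 1 ((#s : ℝ) ^ (1 - 1 / p)) * (∑ i ∈ s, w i ^ p) ^ (1 / p)
        ≤ (#s : ℝ) ^ (1 - 1 / p) * (∑ i ∈ s, w i ^ p) ^ (1 / p) := by
          gcongr
          exact min_le_right _ _
      _ ≤ (#s : ℝ) ^ (1 - 1 / p) * ((#s : ℝ) ^ (1 / p - 1) * ∑ i ∈ s, (w i ^ p) ^ (1 / p)) := by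
          gcongr
          exact rpow_sum_le_const_mul_sum_rpow_of_nonneg s (by rw [le_div_iff₀ hp]; linarith) hwp
      _ = ∑ i ∈ s, w i := by
          rw [← mul_assoc, ← rpow_add hN, sum_congr rfl hroot]
          simp
  · calc min 1 ((#s : ℝ) ^ (1 - 1 / p)) * (∑ i ∈ s, w i ^ p) ^ (1 / p)
        ≤ 1 * ((∑ i ∈ s, w i) ^ p) ^ (1 / p) :=
          mul_le_mul (min_le_left _ _)
            (rpow_le_rpow (sum_nonneg hwp) (sum_rpow_le_rpow_sum s hw hp1) (by positivity))
            hroot_pos zero_le_one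
      _ = ∑ i ∈ s, w i := by rw [one_mul, one_div, rpow_rpow_inv (sum_nonneg hw) hp.ne']

theorem sum_fin_two_mul_add_one (m : ℕ) : ∑ i : Fin m, (2 * (i : ℝ) + 1) = m ^ 2 := by
  rw [Fin.sum_univ_eq_sum_range (fun i => 2 * (i : ℝ) + 1)]
  induction m with
  | zero => simp
  | succ m ih => rw [sum_range_succ, ih]; push_cast; ring

theorem mul_rpow_sum_le_sum_add_sum {ι : Type*} [Fintype ι] {p L : ℝ} (hp : 0 < p) (hL : 0 < L)
    {b s d : ι → ℝ} (hb : ∀ i, 0 ≤ b i) (hs : ∀ i, 0 ≤ s i) (hd : ∀ i, 0 ≤ d i)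
    (h : ∀ i, b i ≤ L * (s i ^ p + d i ^ p)) :
    L ^ (-(1 / p)) * min 1 ((2 * (Fintype.card ι : ℝ)) ^ (1 - 1 / p)) * (∑ i, b i) ^ (1 / p)
      ≤ ∑ i, s i + ∑ i, d i := by
  set w : ι ⊕ ι → ℝ := Sum.elim s d
  have hw : ∀ j ∈ (univ : Finset (ι ⊕ ι)), 0 ≤ w j := by
    rintro (i | i) - <;> simp [w, hs, hd]
  have hsum_w : ∑ j, w j = ∑ i, s i + ∑ i, d i := Fintype.sum_sum_type w
  have hsum_b : ∑ i, b i ≤ L * ∑ j, w j ^ p := by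
    simp only [w, Fintype.sum_sum_type, Sum.elim_inl, Sum.elim_inr, ← sum_add_distrib, mul_sum]
    exact sum_le_sum fun i _ => h i
  have hcard : (#(univ : Finset (ι ⊕ ι)) : ℝ) = 2 * Fintype.card ι := by
    simp only [card_univ, Fintype.card_sum]
    push_cast
    ring
  have hmean := min_one_mul_rpow_sum_rpow_le_sum univ hw hp
  rw [hcard, hsum_w] at hmean
  have hLq : L ^ (-(1 / p)) * L ^ (1 / p) = 1 := by
    rw [← rpow_add hL, neg_add_cancel, rpow_zero]
  calc L ^ (-(1 / p)) * min 1 ((2 * (Fintype.card ι : ℝ)) ^ (1 - 1 / p)) * (∑ i, b i) ^ (1 / p)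
      ≤ L ^ (-(1 / p)) * min 1 ((2 * (Fintype.card ι : ℝ)) ^ (1 - 1 / p))
          * (L * ∑ j, w j ^ p) ^ (1 / p) := by
        gcongr
        exact sum_nonneg fun i _ => hb i
    _ = min 1 ((2 * (Fintype.card ι : ℝ)) ^ (1 - 1 / p)) * (∑ j, w j ^ p) ^ (1 / p) := by
        rw [mul_rpow hL.le (sum_nonneg fun j hj => rpow_nonneg (hw j hj) p)]
        linear_combination (min 1 ((2 * (Fintype.card ι : ℝ)) ^ (1 - 1 / p))
          * (∑ j, w j ^ p) ^ (1 / p)) * hLq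
    _ ≤ ∑ i, s i + ∑ i, d i := hmean

section InnerProductSpace

variable {E : Type*} [NormedAddCommGroup E] [InnerProductSpace ℝ E]

theorem norm_proj_sub_le {X : Set E} (hX : Convex ℝ X) {proj : E → E}
    (hproj : ∀ y, proj y ∈ X ∧ ∀ w ∈ X, ‖proj y - y‖ ≤ ‖w - y‖) (y : E) {w : E} (hw : w ∈ X) :
    ‖proj y - w‖ ≤ ‖y - w‖ := by
  have : Nonempty X := ⟨⟨w, hw⟩⟩
  have hnearest : ‖y - proj y‖ = ⨅ u : X, ‖y - u‖ :=
    le_antisymm (le_ciInf fun u => by simpa only [norm_sub_rev y] using (hproj y).2 u u.2)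
      (ciInf_le ⟨0, Set.forall_mem_range.2 fun u : X => norm_nonneg (y - u)⟩
        ⟨proj y, (hproj y).1⟩)
  have hobtuse := (norm_eq_iInf_iff_real_inner_le_zero hX (hproj y).1).mp hnearest w hw
  have hexpand : ‖y - w‖ ^ 2 = ‖y - proj y‖ ^ 2 - 2 * ⟪y - proj y, w - proj y⟫
      + ‖proj y - w‖ ^ 2 := by
    rw [show y - w = (y - proj y) - (w - proj y) by abel, norm_sub_sq_real,
      norm_sub_rev (proj y)]
  exact (pow_le_pow_iff_left₀ (norm_nonneg _) (norm_nonneg _) two_ne_zero).mp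
    (by nlinarith [sq_nonneg ‖y - proj y‖])

theorem sq_norm_proj_sub_le {X : Set E} (hX : Convex ℝ X) {proj : E → E}
    (hproj : ∀ y, proj y ∈ X ∧ ∀ w ∈ X, ‖proj y - y‖ ≤ ‖w - y‖) {w : E} (hw : w ∈ X)
    (z g : E) (hg : ‖g‖ = 1) (v : ℝ) :
    ‖proj (z - v • g) - w‖ ^ 2 ≤ ‖z - w‖ ^ 2 - 2 * v * ⟪g, z - w⟫ + v ^ 2 := by
  have hexpand : ‖z - v • g - w‖ ^ 2 = ‖z - w‖ ^ 2 - 2 * v * ⟪g, z - w⟫ + v ^ 2 := by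
    rw [show z - v • g - w = (z - w) - v • g by abel, norm_sub_sq_real, real_inner_smul_right,
      real_inner_comm, norm_smul, hg, norm_eq_abs, mul_one, sq_abs]
    ring
  rw [← hexpand]
  exact pow_le_pow_left₀ (norm_nonneg _) (norm_proj_sub_le hX hproj _ hw) 2

theorem div_rpow_le_inner_of_quasiSubgradient {φ : E → ℝ} {x₀ z g : E} {L p : ℝ}
    (hp : 0 < p) (hL : 0 < L) (hg : ‖g‖ = 1) (hφ : ∀ y, φ y ≤ φ x₀ + L * ‖y - x₀‖ ^ p)
    (hsub : ∀ y, φ y < φ z → ⟪g, y - z⟫ ≤ 0) (hlt : φ x₀ < φ z) :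
    ((φ z - φ x₀) / L) ^ (1 / p) ≤ ⟪g, z - x₀⟫ := by
  set r := ((φ z - φ x₀) / L) ^ (1 / p) with hr_def
  have hgap : 0 < (φ z - φ x₀) / L := div_pos (sub_pos.mpr hlt) hL
  have hr : 0 < r := rpow_pos_of_pos hgap _
  have hLr : L * r ^ p = φ z - φ x₀ := by
    rw [hr_def, one_div, rpow_inv_rpow hgap.le hp.ne', mul_div_cancel₀ _ hL.ne']
  by_contra! hlt'
  obtain ⟨t, hmax, htr⟩ := exists_between (max_lt hlt' hr)
  obtain ⟨hinner_t, ht⟩ := max_lt_iff.mp hmax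
  have hbelow : φ (x₀ + t • g) < φ z := calc
    φ (x₀ + t • g) ≤ φ x₀ + L * t ^ p := by
      simpa [norm_smul, hg, abs_of_pos ht] using hφ (x₀ + t • g)
    _ < φ x₀ + L * r ^ p := by gcongr
    _ = φ z := by rw [hLr]; ring
  have hray : ⟪g, x₀ + t • g - z⟫ = t - ⟪g, z - x₀⟫ := by
    rw [show x₀ + t • g - z = t • g - (z - x₀) by abel, inner_sub_right, real_inner_smul_right,
      real_inner_self_eq_norm_sq, hg]
    ring
  linarith [hsub _ hbelow]

/-- `z 0, …, z m` are the inner iterates `z_{k,0}, …, z_{k,m}` of one cycle of the method. -/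
def IsIncrementalCycle {m : ℕ} (f : Fin m → E → ℝ) (proj : E → E) (v : ℝ) (xstar : E)
    (z : ℕ → E) : Prop :=
  ∀ i : Fin m,
    (f i (z i) = f i xstar ∧ z (i + 1) = z i) ∨
    (f i xstar < f i (z i) ∧ ∃ g : E, ‖g‖ = 1 ∧
      (∀ y, f i y < f i (z i) → ⟪g, y - z i⟫ ≤ 0) ∧ z (i + 1) = proj (z i - v • g))

namespace IsIncrementalCycle

variable {m : ℕ} {f : Fin m → E → ℝ} {proj : E → E} {v : ℝ} {xstar : E} {z : ℕ → E}
  {X : Set E}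

theorem mem (h : IsIncrementalCycle f proj v xstar z) (hproj : ∀ y, proj y ∈ X)
    (h0 : z 0 ∈ X) : ∀ j ≤ m, z j ∈ X := by
  intro j hj
  induction j with
  | zero => exact h0
  | succ j ih =>
    rcases h ⟨j, hj⟩ with ⟨-, hstay⟩ | ⟨-, g, -, -, hmove⟩
    · rw [show z (j + 1) = z j from hstay]
      exact ih (by omega)
    · rw [show z (j + 1) = proj (z j - v • g) from hmove]
      exact hproj _

theorem norm_succ_sub_le (h : IsIncrementalCycle f proj v xstar z) (hX : Convex ℝ X)
    (hproj : ∀ y, proj y ∈ X ∧ ∀ w ∈ X, ‖proj y - y‖ ≤ ‖w - y‖) (hv : 0 ≤ v) (i : Fin m)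
    (hzi : z i ∈ X) : ‖z (i + 1) - z i‖ ≤ v := by
  rcases h i with ⟨-, hstay⟩ | ⟨-, g, hg, -, hmove⟩
  · simpa [hstay] using hv
  · calc ‖z (i + 1) - z i‖ ≤ ‖z i - v • g - z i‖ := hmove ▸ norm_proj_sub_le hX hproj _ hzi
      _ = v := by simp [norm_smul, hg, abs_of_nonneg hv]

theorem norm_sub_zero_le (h : IsIncrementalCycle f proj v xstar z) (hX : Convex ℝ X)
    (hproj : ∀ y, proj y ∈ X ∧ ∀ w ∈ X, ‖proj y - y‖ ≤ ‖w - y‖) (hv : 0 ≤ v) (h0 : z 0 ∈ X) :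
    ∀ j ≤ m, ‖z j - z 0‖ ≤ j * v := by
  intro j hj
  induction j with
  | zero => simp
  | succ j ih =>
    have hstep := h.norm_succ_sub_le hX hproj hv ⟨j, hj⟩
      (h.mem (fun y => (hproj y).1) h0 j (by omega))
    calc ‖z (j + 1) - z 0‖ ≤ ‖z (j + 1) - z j‖ + ‖z j - z 0‖ :=
          norm_sub_le_norm_sub_add_norm_sub _ _ _
      _ ≤ v + j * v := add_le_add hstep (ih (by omega))
      _ = (j + 1 : ℕ) * v := by push_cast; ring

theorem sq_norm_succ_sub_le (h : IsIncrementalCycle f proj v xstar z) (hX : Convex ℝ X)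
    (hproj : ∀ y, proj y ∈ X ∧ ∀ w ∈ X, ‖proj y - y‖ ≤ ‖w - y‖) (hxstar : xstar ∈ X)
    {L p : ℝ} (hp : 0 < p) (hL : 0 < L) (hHolder : ∀ i y, f i y ≤ f i xstar + L * ‖y - xstar‖ ^ p)
    (hv : 0 ≤ v) (i : Fin m) :
    ‖z (i + 1) - xstar‖ ^ 2
      ≤ ‖z i - xstar‖ ^ 2 - 2 * v * ((f i (z i) - f i xstar) / L) ^ (1 / p) + v ^ 2 := by
  rcases h i with ⟨hmin, hstay⟩ | ⟨hlt, g, hg, hsub, hmove⟩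
  · simpa [hstay, hmin, zero_rpow (inv_ne_zero hp.ne')] using sq_nonneg v
  · have hdescent := div_rpow_le_inner_of_quasiSubgradient hp hL hg (hHolder i) hsub hlt
    have hproj_step := sq_norm_proj_sub_le hX hproj hxstar (z i) g hg v
    rw [← hmove] at hproj_step
    linear_combination hproj_step + 2 * v * hdescent

theorem sq_norm_sub_le_sum_rpow (h : IsIncrementalCycle f proj v xstar z) (hX : Convex ℝ X)
    (hproj : ∀ y, proj y ∈ X ∧ ∀ w ∈ X, ‖proj y - y‖ ≤ ‖w - y‖) (hxstar : xstar ∈ X)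
    {L p : ℝ} (hp : 0 < p) (hL : 0 < L) (hHolder : ∀ i y, f i y ≤ f i xstar + L * ‖y - xstar‖ ^ p)
    (hv : 0 ≤ v) :
    ‖z m - xstar‖ ^ 2
      ≤ ‖z 0 - xstar‖ ^ 2 - 2 * v * ∑ i, ((f i (z i) - f i xstar) / L) ^ (1 / p) + m * v ^ 2 := by
  have htelescope : ‖z m - xstar‖ ^ 2 - ‖z 0 - xstar‖ ^ 2
      = ∑ i : Fin m, (‖z (i + 1) - xstar‖ ^ 2 - ‖z i - xstar‖ ^ 2) := by
    rw [Fin.sum_univ_eq_sum_range (fun i => ‖z (i + 1) - xstar‖ ^ 2 - ‖z i - xstar‖ ^ 2),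
      sum_range_sub (fun i => ‖z i - xstar‖ ^ 2)]
  have hsteps := sum_le_sum fun i (_ : i ∈ univ) =>
    sub_le_iff_le_add'.mpr (h.sq_norm_succ_sub_le hX hproj hxstar hp hL hHolder hv i)
  simp only [sum_sub_distrib, sum_const, card_univ, Fintype.card_fin,
    nsmul_eq_mul, ← mul_sum] at hsteps htelescope
  linarith

theorem sq_norm_sub_le_rpow_sum (h : IsIncrementalCycle f proj v xstar z) (hX : Convex ℝ X)
    (hproj : ∀ y, proj y ∈ X ∧ ∀ w ∈ X, ‖proj y - y‖ ≤ ‖w - y‖) (hxstar : xstar ∈ X)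
    (hmin : ∀ i, ∀ y ∈ X, f i xstar ≤ f i y) {L p : ℝ} (hp : 0 < p) (hL : 0 < L)
    (hHolder : ∀ i, ∀ x ∈ X, ∀ y, |f i y - f i x| ≤ L * ‖y - x‖ ^ p) (hv : 0 ≤ v)
    (h0 : z 0 ∈ X) :
    ‖z m - xstar‖ ^ 2 ≤ ‖z 0 - xstar‖ ^ 2
      - 2 * v * (L ^ (-(1 / p)) * min 1 ((2 * (m : ℝ)) ^ (1 - 1 / p)))
        * (∑ i, f i (z 0) - ∑ i, f i xstar) ^ (1 / p) + (m : ℝ) ^ 2 * v ^ 2 := by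
  set s : Fin m → ℝ := fun i => ((f i (z i) - f i xstar) / L) ^ (1 / p) with hs_def
  have hzX : ∀ i : Fin m, z i ∈ X := fun i => h.mem (fun y => (hproj y).1) h0 i i.is_lt.le
  have hgap : ∀ i, L * s i ^ p = f i (z i) - f i xstar := fun i => by
    rw [hs_def, one_div, rpow_inv_rpow (div_nonneg (sub_nonneg.mpr (hmin i _ (hzX i))) hL.le)
      hp.ne', mul_div_cancel₀ _ hL.ne']
  have hdrift : ∀ i : Fin m, f i (z 0) - f i xstar ≤ L * (s i ^ p + ((i : ℝ) * v) ^ p) := by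
    intro i
    have hnear : ‖z 0 - z i‖ ^ p ≤ ((i : ℝ) * v) ^ p := by
      rw [norm_sub_rev]
      exact rpow_le_rpow (norm_nonneg _) (h.norm_sub_zero_le hX hproj hv h0 i i.is_lt.le) hp.le
    linarith [le_abs_self (f i (z 0) - f i (z i)), hHolder i _ (hzX i) (z 0), hgap i,
      mul_le_mul_of_nonneg_left hnear hL.le]
  have hagg := mul_rpow_sum_le_sum_add_sum hp hL (fun i => sub_nonneg.mpr (hmin i _ h0))
    (fun i => rpow_nonneg (div_nonneg (sub_nonneg.mpr (hmin i _ (hzX i))) hL.le) _)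
    (fun i => by positivity) hdrift
  rw [Fintype.card_fin, sum_sub_distrib, ← sum_mul] at hagg
  have hindex : 2 * ∑ i : Fin m, (i : ℝ) + m = (m : ℝ) ^ 2 := by
    simpa [sum_add_distrib, mul_sum] using sum_fin_two_mul_add_one m
  have hcycle := h.sq_norm_sub_le_sum_rpow hX hproj hxstar hp hL
    (fun i y => by linarith [le_abs_self (f i y - f i xstar), hHolder i _ hxstar y]) hv
  linear_combination hcycle + 2 * v * hagg + v ^ 2 * hindex

end IsIncrementalCycle

end InnerProductSpace

theorem Filter.frequently_lt_of_le_sub {D t : ℕ → ℝ} (hD : ∀ k, 0 ≤ D k)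
    (h : ∀ k, D (k + 1) ≤ D k - t k) {ε : ℝ} (hε : 0 < ε) : ∃ᶠ k in atTop, t k < ε := by
  by_contra hcon
  simp only [not_frequently, not_lt] at hcon
  obtain ⟨K, hK⟩ := eventually_atTop.mp hcon
  have hdecr : ∀ j : ℕ, D (K + j) ≤ D K - j * ε := by
    intro j
    induction j with
    | zero => simp
    | succ j ih =>
      rw [← add_assoc]
      push_cast
      linarith [hK (K + j) (Nat.le_add_right K j), h (K + j)]
  obtain ⟨j, hj⟩ := exists_nat_gt (D K / ε)
  rw [div_lt_iff₀ hε] at hj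
  linarith [hdecr j, hD (K + j)]

theorem liminf_le_add_rpow_of_le_sub_rpow {D u : ℕ → ℝ} {F C M v p : ℝ} (hp : 0 < p)
    (hC : 0 < C) (hM : 0 ≤ M) (hv : 0 < v) (hD : ∀ k, 0 ≤ D k) (hu : ∀ k, F ≤ u k)
    (h : ∀ k, D (k + 1) ≤ D k - 2 * v * C * (u k - F) ^ (1 / p) + M * v ^ 2) :
    liminf u atTop ≤ F + (M * v / (2 * C)) ^ p := by
  set Z := M * v / (2 * C)
  have hZ : 0 ≤ Z := by positivity
  have hMZ : M * v ^ 2 = 2 * v * C * Z := by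
    simp only [Z]
    field_simp
  refine le_of_forall_gt_imp_ge_of_dense fun b hb => ?_
  have hZb : Z < (b - F) ^ (1 / p) := by
    have hZp : Z ^ p < b - F := by linarith
    calc Z = (Z ^ p) ^ (1 / p) := by rw [one_div, rpow_rpow_inv hZ hp.ne']
      _ < (b - F) ^ (1 / p) := rpow_lt_rpow (rpow_nonneg hZ p) hZp (by positivity)
  have hε : 0 < 2 * v * C * ((b - F) ^ (1 / p) - Z) := by
    have := sub_pos.mpr hZb
    positivity
  have hfreq := frequently_lt_of_le_sub hD
    (t := fun k => 2 * v * C * (u k - F) ^ (1 / p) - M * v ^ 2) (fun k => by linarith [h k]) hε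
  refine liminf_le_of_frequently_le (hfreq.mono fun k hk => ?_) (isBoundedUnder_of ⟨F, hu⟩)
  have hlt : 2 * v * C * (u k - F) ^ (1 / p) < 2 * v * C * (b - F) ^ (1 / p) := by
    linarith
  have := (rpow_lt_rpow_iff (sub_nonneg.mpr (hu k)) (by linarith [rpow_nonneg hZ p])
    (by positivity)).mp (lt_of_mul_lt_mul_left hlt (by positivity))
  linarith

theorem stmt9_general {n m : ℕ} (hm : 0 < m)
    (f : Fin m → EuclideanSpace ℝ (Fin n) → ℝ)
    (X : Set (EuclideanSpace ℝ (Fin n)))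
    (hXconv : Convex ℝ X)
    (p Lmax : ℝ) (hp : 0 < p) (hL : 0 < Lmax)
    (hHolder : ∀ i, ∀ x ∈ X, ∀ y, |f i y - f i x| ≤ Lmax * ‖y - x‖ ^ p)
    (xstar : EuclideanSpace ℝ (Fin n)) (hxsX : xstar ∈ X)
    (hmin : ∀ i, ∀ y ∈ X, f i xstar ≤ f i y)
    (proj : EuclideanSpace ℝ (Fin n) → EuclideanSpace ℝ (Fin n))
    (hproj : ∀ y, proj y ∈ X ∧ ∀ w ∈ X, ‖proj y - y‖ ≤ ‖w - y‖)
    -- constant stepsize rule (S1)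
    (v : ℝ) (hv : 0 < v)
    (x : ℕ → EuclideanSpace ℝ (Fin n)) (z : ℕ → ℕ → EuclideanSpace ℝ (Fin n))
    (hx0 : x 0 ∈ X)
    (hz0 : ∀ k, z k 0 = x k)
    (hstep : ∀ k, ∀ i : Fin m,
      (f i (z k i) = f i xstar ∧ z k ((i : ℕ) + 1) = z k i) ∨
      (f i xstar < f i (z k i) ∧ ∃ g : EuclideanSpace ℝ (Fin n), ‖g‖ = 1 ∧
        (∀ y, f i y < f i (z k i) → (inner ℝ g (y - z k i) : ℝ) ≤ 0) ∧
        z k ((i : ℕ) + 1) = proj (z k i - v • g)))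
    (hxsucc : ∀ k, x (k + 1) = z k m) :
    Filter.liminf (fun k => ∑ i, f i (x k)) Filter.atTop ≤
      (∑ i, f i xstar) +
        ((m : ℝ) ^ 2 * v /
          (2 * (Lmax ^ (-(1 / p)) * min 1 ((2 * (m : ℝ)) ^ (1 - 1 / p))))) ^ p := by
  have hcycle : ∀ k, IsIncrementalCycle f proj v xstar (z k) := hstep
  have hxX : ∀ k, x k ∈ X := by
    intro k
    induction k with
    | zero => exact hx0
    | succ k ih =>
      rw [hxsucc]
      exact (hcycle k).mem (fun y => (hproj y).1) (hz0 k ▸ ih) m le_rfl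
  have hC : 0 < Lmax ^ (-(1 / p)) * min 1 ((2 * (m : ℝ)) ^ (1 - 1 / p)) :=
    mul_pos (rpow_pos_of_pos hL _)
      (lt_min one_pos (rpow_pos_of_pos (mul_pos two_pos (Nat.cast_pos.mpr hm)) _))
  refine liminf_le_add_rpow_of_le_sub_rpow hp hC (sq_nonneg _) hv (D := fun k => ‖x k - xstar‖ ^ 2)
    (fun k => sq_nonneg _) (fun k => sum_le_sum fun i _ => hmin i _ (hxX k)) fun k => ?_
  have hbasic := (hcycle k).sq_norm_sub_le_rpow_sum hXconv hproj hxsX hmin hp hL hHolder hv.le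
    (hz0 k ▸ hxX k)
  rwa [hz0, ← hxsucc] at hbasic

/-- Incremental subgradient method with constant stepsize (Theorem 3.2). -/
theorem stmt9 {n m : ℕ} (hm : 0 < m)
    (f : Fin m → EuclideanSpace ℝ (Fin n) → ℝ)
    (X : Set (EuclideanSpace ℝ (Fin n))) (hXne : X.Nonempty)
    (hXc : IsClosed X) (hXconv : Convex ℝ X)
    (hqc : ∀ i, QuasiconvexOn ℝ Set.univ (f i)) (hcont : ∀ i, Continuous (f i))
    (p Lmax : ℝ) (hp : 0 < p) (hL : 0 < Lmax)
    (hHolder : ∀ i, ∀ x ∈ X, ∀ y, |f i y - f i x| ≤ Lmax * ‖y - x‖ ^ p)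
    (xstar : EuclideanSpace ℝ (Fin n)) (hxsX : xstar ∈ X)
    (hmin : ∀ i, ∀ y ∈ X, f i xstar ≤ f i y)
    (proj : EuclideanSpace ℝ (Fin n) → EuclideanSpace ℝ (Fin n))
    (hproj : ∀ y, proj y ∈ X ∧ ∀ w ∈ X, ‖proj y - y‖ ≤ ‖w - y‖)
    -- constant stepsize rule (S1)
    (v : ℝ) (hv : 0 < v)
    (x : ℕ → EuclideanSpace ℝ (Fin n)) (z : ℕ → ℕ → EuclideanSpace ℝ (Fin n))
    (hx0 : x 0 ∈ X)
    (hz0 : ∀ k, z k 0 = x k)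
    (hstep : ∀ k, ∀ i : Fin m,
      (f i (z k i) = f i xstar ∧ z k ((i : ℕ) + 1) = z k i) ∨
      (f i xstar < f i (z k i) ∧ ∃ g : EuclideanSpace ℝ (Fin n), ‖g‖ = 1 ∧
        (∀ y, f i y < f i (z k i) → (inner ℝ g (y - z k i) : ℝ) ≤ 0) ∧
        z k ((i : ℕ) + 1) = proj (z k i - v • g)))
    (hxsucc : ∀ k, x (k + 1) = z k m) :
    Filter.liminf (fun k => ∑ i, f i (x k)) Filter.atTop ≤
      (∑ i, f i xstar) +
        ((m : ℝ) ^ 2 * v /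
          (2 * (Lmax ^ (-(1 / p)) * min 1 ((2 * (m : ℝ)) ^ (1 - 1 / p))))) ^ p :=
  stmt9_general hm f X hXconv p Lmax hp hL hHolder xstar hxsX hmin proj hproj v hv x z hx0 hz0 hstep
    hxsucc
end

section
/- Suppose a sequence {x_k} in ℝ^n satisfies, for some x* and constants C > 0, m ≥ 1, p > 0, the inequality ‖x_{k+1} - x*‖² ≤ ‖x_k - x*‖² - 2 v_k C (f(x_k) - f*)^{1/p} + m² v_k² for all k, where f(x_k) ≥ f* and the stepsizes satisfy v_k > 0, v_k → 0, ∑_k v_k = ∞. Then liminf_{k→∞} f(x_k) = f*. -/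
/-!
Suppose `f (x k) ≥ f* + δ` for all large `k`. Since `v k → 0`, the error term `m² v k²` is
eventually dominated by half of the descent term, so `‖x k - x*‖²` drops by at least a fixed
multiple of `v k` at every late step. As `∑ v k = ∞`, the squared distances would tend to `-∞`,
which is absurd. Hence `f (x k) < f* + δ` infinitely often for every `δ > 0`, and with
`f (x k) ≥ f*` this pins the lower limit down to `f*`.
-/

open Filter Topology Finset

theorem tendsto_atBot_of_eventually_le_sub {u w : ℕ → ℝ}
    (hw : Tendsto (fun N => ∑ k ∈ range N, w k) atTop atTop)
    (hstep : ∀ᶠ k in atTop, u (k + 1) ≤ u k - w k) :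
    Tendsto u atTop atBot := by
  obtain ⟨K, hK⟩ := eventually_atTop.mp hstep
  have hbound : ∀ k, K ≤ k → u k + ∑ i ∈ range k, w i ≤ u K + ∑ i ∈ range K, w i := by
    refine Nat.le_induction le_rfl fun k hk ih => ?_
    rw [sum_range_succ]
    linarith [hK k hk]
  refine tendsto_atBot_mono' atTop ?_
    (tendsto_atBot_add_const_left atTop (u K + ∑ i ∈ range K, w i)
      (tendsto_neg_atTop_atBot.comp hw))
  filter_upwards [eventually_ge_atTop K] with k hk
  simp only [Function.comp_apply]
  linarith [hbound k hk]

theorem frequently_lt_of_le_sub_mul_add_sq {d g v : ℕ → ℝ} {M η : ℝ}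
    (hd : ∀ k, 0 ≤ d k) (hv : ∀ k, 0 ≤ v k) (hv0 : Tendsto v atTop (𝓝 0))
    (hvsum : Tendsto (fun N => ∑ k ∈ range N, v k) atTop atTop)
    (hstep : ∀ k, d (k + 1) ≤ d k - v k * g k + M * v k ^ 2) (hη : 0 < η) :
    ∃ᶠ k in atTop, g k < η := by
  by_contra hcon
  simp only [not_frequently, not_lt] at hcon
  have hsmall : ∀ᶠ k in atTop, M * v k < η / 2 := by
    have : Tendsto (fun k => M * v k) atTop (𝓝 0) := by simpa using hv0.const_mul M
    exact this.eventually_lt_const (half_pos hη)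
  have hdescent : ∀ᶠ k in atTop, d (k + 1) ≤ d k - η / 2 * v k := by
    filter_upwards [hcon, hsmall] with k hg hM
    have hvg : v k * η ≤ v k * g k := mul_le_mul_of_nonneg_left hg (hv k)
    have hvM : M * v k ^ 2 ≤ η / 2 * v k := by
      nlinarith [mul_le_mul_of_nonneg_right hM.le (hv k)]
    linarith [hstep k]
  have hdiv : Tendsto (fun N => ∑ k ∈ range N, η / 2 * v k) atTop atTop := by
    simpa only [← mul_sum] using hvsum.const_mul_atTop (half_pos hη)
  obtain ⟨k, hk⟩ :=
    ((tendsto_atBot_of_eventually_le_sub hdiv hdescent).eventually_lt_atBot 0).exists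
  exact (hd k).not_gt hk

theorem liminf_eq_of_le_of_frequently_lt {ι : Type*} {l : Filter ι} [l.NeBot] {u : ι → ℝ}
    {b : ℝ}
    (hb : ∀ i, b ≤ u i) (hfreq : ∀ δ, 0 < δ → ∃ᶠ i in l, u i < b + δ) :
    liminf u l = b := by
  have hcobdd : IsCoboundedUnder (· ≥ ·) l u := by
    refine IsCobounded.mk (b + 1) fun s hs => ?_
    obtain ⟨i, hi, hlt⟩ := ((eventually_map.mp hs).and_frequently (hfreq 1 one_pos)).exists
    exact ⟨u i, hi, hlt.le⟩
  refine le_antisymm (le_of_forall_pos_le_add fun δ hδ => ?_)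
    (le_liminf_of_le hcobdd (.of_forall hb))
  exact liminf_le_of_frequently_le ((hfreq δ hδ).mono fun _ => le_of_lt)
    (isBoundedUnder_of ⟨b, hb⟩)

theorem stmt10_general {n : ℕ} (x : ℕ → EuclideanSpace ℝ (Fin n))
    (xstar : EuclideanSpace ℝ (Fin n))
    (f : EuclideanSpace ℝ (Fin n) → ℝ) (fstar C m p : ℝ)
    (hC : 0 < C) (hp : 0 < p)
    (hf : ∀ k, fstar ≤ f (x k))
    (v : ℕ → ℝ) (hvpos : ∀ k, 0 < v k)
    (hv0 : Tendsto v atTop (nhds 0))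
    (hvsum : Tendsto (fun N => ∑ k ∈ Finset.range N, v k) atTop atTop)
    (hBI : ∀ k, ‖x (k + 1) - xstar‖ ^ 2 ≤ ‖x k - xstar‖ ^ 2
        - 2 * v k * C * (f (x k) - fstar) ^ (1 / p) + m ^ 2 * v k ^ 2) :
    liminf (fun k => f (x k)) atTop = fstar := by
  refine liminf_eq_of_le_of_frequently_lt hf fun δ hδ => ?_
  have hfreq := frequently_lt_of_le_sub_mul_add_sq (M := m ^ 2)
    (g := fun k => 2 * C * (f (x k) - fstar) ^ (1 / p))
    (fun k => sq_nonneg ‖x k - xstar‖) (fun k => (hvpos k).le) hv0 hvsum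
    (fun k => by linarith [hBI k]) (by positivity : 0 < 2 * C * δ ^ (1 / p))
  refine hfreq.mono fun k hk => ?_
  have hroot : (f (x k) - fstar) ^ (1 / p) < δ ^ (1 / p) :=
    lt_of_mul_lt_mul_left hk (by positivity)
  have := (Real.rpow_lt_rpow_iff (sub_nonneg.mpr (hf k)) hδ.le (by positivity)).mp hroot
  linarith

/-- Abstract form of Theorem 3.3(i): diminishing stepsize rule. -/
theorem stmt10 {n : ℕ} (x : ℕ → EuclideanSpace ℝ (Fin n))
    (xstar : EuclideanSpace ℝ (Fin n))
    (f : EuclideanSpace ℝ (Fin n) → ℝ) (fstar C m p : ℝ)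
    (hC : 0 < C) (hm : 1 ≤ m) (hp : 0 < p)
    (hf : ∀ k, fstar ≤ f (x k))
    (v : ℕ → ℝ) (hvpos : ∀ k, 0 < v k)
    (hv0 : Tendsto v atTop (nhds 0))
    (hvsum : Tendsto (fun N => ∑ k ∈ Finset.range N, v k) atTop atTop)
    (hBI : ∀ k, ‖x (k + 1) - xstar‖ ^ 2 ≤ ‖x k - xstar‖ ^ 2
        - 2 * v k * C * (f (x k) - fstar) ^ (1 / p) + m ^ 2 * v k ^ 2) :
    liminf (fun k => f (x k)) atTop = fstar :=
  stmt10_general x xstar f fstar C m p hC hp hf v hvpos hv0 hvsum hBI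
end

section
/- Suppose a sequence {x_k} in ℝ^n satisfies, for every x* in a nonempty set X* and constants C > 0, m ≥ 1, p > 0: ‖x_{k+1} - x*‖² ≤ ‖x_k - x*‖² - 2 v_k C (f(x_k) - f*)^{1/p} + m² v_k², with f(x_k) ≥ f* for all k, v_k > 0, ∑_k v_k = ∞ and ∑_k v_k² < ∞, and suppose f is continuous with X* = {x ∈ X : f(x) = f*} containing every cluster point of {x_k} at which f attains f*. Then {x_k} converges to a point of X*. -/
/-!
Summing the basic inequality for one `x* ∈ X*` shows that `‖x_k - x*‖²` converges (so `x_k` is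
bounded) and that `∑ v_k (f(x_k) - f*)^{1/p} < ∞`; as `∑ v_k = ∞`, the values `f(x_k)` come
arbitrarily close to `f*`, and compactness gives a cluster point `y` with `f y = f*`, hence
`y ∈ X*`. Applying the first fact to `x* = y` now shows that `‖x_k - y‖` converges, and since
`y` is a cluster point the limit is `0`.
-/

open Filter Topology Metric Set

lemma MapClusterPt.eq_of_tendsto {X ι : Type*} [TopologicalSpace X] [T2Space X] {F : Filter ι}
    {u : ι → X} {a b : X} (ha : MapClusterPt a F u) (hb : Tendsto u F (𝓝 b)) : a = b :=
  eq_of_nhds_neBot (ha.clusterPt.mono hb)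

lemma IsCompact.exists_mapClusterPt_apply_eq {X Y ι : Type*} [TopologicalSpace X]
    [TopologicalSpace Y] [T2Space Y] {F : Filter ι} {s : Set X} (hs : IsCompact s) {u : ι → X}
    (hu : ∀ i, u i ∈ s) {g : X → Y} (hg : Continuous g) {c : Y} (hc : MapClusterPt c F (g ∘ u)) :
    ∃ a ∈ s, MapClusterPt a F u ∧ g a = c := by
  set G := F ⊓ comap (g ∘ u) (𝓝 c)
  have : G.NeBot := by
    rw [← map_neBot_iff (g ∘ u), Filter.push_pull, inf_comm]
    exact hc
  obtain ⟨a, has, ha⟩ :=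
    hs.exists_mapClusterPt (f := G) (le_principal_iff.2 (mem_map.2 (Eventually.of_forall hu)))
  exact ⟨a, has, ha.mono inf_le_left,
    (ha.continuousAt_comp hg.continuousAt).eq_of_tendsto (tendsto_comap.mono_left inf_le_right)⟩

lemma tendsto_of_tendsto_dist_of_mapClusterPt {α ι : Type*} [PseudoMetricSpace α] {F : Filter ι}
    {u : ι → α} {a : α} {L : ℝ} (hL : Tendsto (fun i => dist (u i) a) F (𝓝 L))
    (ha : MapClusterPt a F u) : Tendsto u F (𝓝 a) := by
  have hL0 : dist a a = L :=
    (ha.continuousAt_comp (continuous_id.dist continuous_const).continuousAt).eq_of_tendsto hL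
  rw [dist_self] at hL0
  exact tendsto_iff_dist_tendsto_zero.2 (hL0 ▸ hL)

lemma mapClusterPt_zero_of_summable_mul {v d : ℕ → ℝ} (hv : ∀ k, 0 ≤ v k) (hv' : ¬ Summable v)
    (hd : ∀ k, 0 ≤ d k) (hvd : Summable fun k => v k * d k) : MapClusterPt 0 atTop d := by
  refine nhds_basis_ball.mapClusterPt_iff_frequently.2 fun ε hε => ?_
  by_contra h
  refine hv' (Summable.of_norm_bounded_eventually_nat (hvd.mul_left ε⁻¹) ?_)
  filter_upwards [not_frequently.1 h] with k hk
  rw [mem_ball, Real.dist_0_eq_abs, abs_of_nonneg (hd k), not_lt] at hk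
  rw [Real.norm_of_nonneg (hv k), le_inv_mul_iff₀ hε, mul_comm]
  exact mul_le_mul_of_nonneg_left hk (hv k)

lemma sum_range_add_le_of_succ_le_sub_add {a w e : ℕ → ℝ}
    (hstep : ∀ k, a (k + 1) ≤ a k - w k + e k) (K : ℕ) :
    a K + ∑ k ∈ Finset.range K, w k ≤ a 0 + ∑ k ∈ Finset.range K, e k := by
  induction K with
  | zero => simp
  | succ K ih =>
    simp only [Finset.sum_range_succ]
    linarith [hstep K]

lemma summable_and_exists_tendsto_of_succ_le_sub_add {a w e : ℕ → ℝ} (ha : ∀ k, 0 ≤ a k)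
    (hw : ∀ k, 0 ≤ w k) (he : ∀ k, 0 ≤ e k) (hes : Summable e)
    (hstep : ∀ k, a (k + 1) ≤ a k - w k + e k) :
    Summable w ∧ ∃ L, Tendsto a atTop (𝓝 L) := by
  have hsum := sum_range_add_le_of_succ_le_sub_add hstep
  have he_le : ∀ K, ∑ k ∈ Finset.range K, e k ≤ ∑' k, e k :=
    fun K => hes.sum_le_tsum _ fun k _ => he k
  refine ⟨summable_of_sum_range_le (c := a 0 + ∑' k, e k) hw fun K => ?_, ?_⟩
  · linarith [hsum K, ha K, he_le K]
  · set b : ℕ → ℝ := fun k => a k - ∑ i ∈ Finset.range k, e i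
    have hb : Antitone b := antitone_nat_of_succ_le fun k => by
      simp only [b, Finset.sum_range_succ]
      linarith [hstep k, hw k]
    have hbdd : BddBelow (range b) := ⟨-∑' k, e k, by
      rintro _ ⟨k, rfl⟩
      linarith [ha k, he_le k]⟩
    refine ⟨_, ((tendsto_atTop_ciInf hb hbdd).add hes.hasSum.tendsto_sum_nat).congr fun k => ?_⟩
    exact sub_add_cancel _ _

theorem stmt11_general {n : ℕ} (x : ℕ → EuclideanSpace ℝ (Fin n))
    (Xstar : Set (EuclideanSpace ℝ (Fin n))) (hne : Xstar.Nonempty)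
    (f : EuclideanSpace ℝ (Fin n) → ℝ) (fstar C m p : ℝ)
    (hC : 0 < C) (hp : 0 < p)
    (hcont : Continuous f)
    (hf : ∀ k, fstar ≤ f (x k))
    (v : ℕ → ℝ) (hvpos : ∀ k, 0 < v k)
    (hvsum : Tendsto (fun N => ∑ k ∈ Finset.range N, v k) atTop atTop)
    (hv2 : Summable fun k => v k ^ 2)
    (hcluster : ∀ y, MapClusterPt y atTop x → f y = fstar → y ∈ Xstar)
    (hBI : ∀ xs ∈ Xstar, ∀ k, ‖x (k + 1) - xs‖ ^ 2 ≤ ‖x k - xs‖ ^ 2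
        - 2 * v k * C * (f (x k) - fstar) ^ (1 / p) + m ^ 2 * v k ^ 2) :
    ∃ xbar ∈ Xstar, Tendsto x atTop (nhds xbar) := by
  obtain ⟨xs, hxs⟩ := hne
  set g : EuclideanSpace ℝ (Fin n) → ℝ := fun z => (f z - fstar) ^ (1 / p)
  have hg : Continuous g := (hcont.sub continuous_const).rpow_const fun _ => Or.inr (by positivity)
  have hgx (k : ℕ) : 0 ≤ g (x k) := Real.rpow_nonneg (sub_nonneg.2 (hf k)) _
  have hv (k : ℕ) : 0 ≤ v k := (hvpos k).le
  have fejer (z) (hz : z ∈ Xstar) : Summable (fun k => 2 * v k * C * g (x k)) ∧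
      ∃ L, Tendsto (fun k => ‖x k - z‖ ^ 2) atTop (𝓝 L) :=
    summable_and_exists_tendsto_of_succ_le_sub_add (fun k => by positivity)
      (fun k => mul_nonneg (by have := hv k; positivity) (hgx k)) (fun k => by positivity)
      (hv2.mul_left _) (hBI z hz)
  have hdist (z) (hz : z ∈ Xstar) : ∃ L, Tendsto (fun k => dist (x k) z) atTop (𝓝 L) := by
    obtain ⟨L, hL⟩ := (fejer z hz).2
    exact ⟨_, hL.sqrt.congr fun k => by rw [Real.sqrt_sq (norm_nonneg _), dist_eq_norm]⟩
  obtain ⟨L, hL⟩ := hdist xs hxs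
  obtain ⟨R, hR⟩ := hL.bddAbove_range
  -- `Real.rpow` can vanish at a negative base, so `fstar ≤ f y` has to come from the compact set
  have hK : IsCompact (closedBall xs R ∩ {z | fstar ≤ f z}) :=
    (isCompact_closedBall xs R).inter_right (isClosed_le continuous_const hcont)
  have hvg : Summable fun k => v k * g (x k) :=
    (summable_mul_left_iff (by positivity : 2 * C ≠ 0)).1
      ((fejer xs hxs).1.congr fun k => by ring)
  have hliminf : MapClusterPt 0 atTop (g ∘ x) := mapClusterPt_zero_of_summable_mul hv
    ((not_summable_iff_tendsto_nat_atTop_of_nonneg hv).2 hvsum) hgx hvg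
  obtain ⟨y, ⟨-, hfy⟩, hy, hgy⟩ :=
    hK.exists_mapClusterPt_apply_eq (fun k => ⟨hR ⟨k, rfl⟩, hf k⟩) hg hliminf
  have hyX : y ∈ Xstar := by
    rw [Real.rpow_eq_zero (sub_nonneg.2 hfy) (one_div_ne_zero hp.ne'), sub_eq_zero] at hgy
    exact hcluster y hy hgy
  obtain ⟨Ly, hLy⟩ := hdist y hyX
  exact ⟨y, hyX, tendsto_of_tendsto_dist_of_mapClusterPt hLy hy⟩

/-- Abstract form of Theorem 3.3(iii): square-summable diminishing stepsizes. -/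
theorem stmt11 {n : ℕ} (x : ℕ → EuclideanSpace ℝ (Fin n))
    (X Xstar : Set (EuclideanSpace ℝ (Fin n))) (hne : Xstar.Nonempty)
    (f : EuclideanSpace ℝ (Fin n) → ℝ) (fstar C m p : ℝ)
    (hC : 0 < C) (hm : 1 ≤ m) (hp : 0 < p)
    (hcont : Continuous f)
    (hXstar : Xstar = {y ∈ X | f y = fstar})
    (hf : ∀ k, fstar ≤ f (x k))
    (v : ℕ → ℝ) (hvpos : ∀ k, 0 < v k)
    (hvsum : Tendsto (fun N => ∑ k ∈ Finset.range N, v k) atTop atTop)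
    (hv2 : Summable fun k => v k ^ 2)
    (hcluster : ∀ y, MapClusterPt y atTop x → f y = fstar → y ∈ Xstar)
    (hBI : ∀ xs ∈ Xstar, ∀ k, ‖x (k + 1) - xs‖ ^ 2 ≤ ‖x k - xs‖ ^ 2
        - 2 * v k * C * (f (x k) - fstar) ^ (1 / p) + m ^ 2 * v k ^ 2) :
    ∃ xbar ∈ Xstar, Tendsto x atTop (nhds xbar) :=
  stmt11_general x Xstar hne f fstar C m p hC hp hcont hf v hvpos hvsum hv2 hcluster hBI
end

section
/- For each iteration of the randomized incremental subgradient method, with ω_k uniformly distributed on I_k = {i : f_i(x_k) > f_i*}, the conditional expectation satisfies E[(f_{ω_k}(x_k) - f_{ω_k}*)^{1/p} | x_k] ≥ (1/m) min{1, m^{1-1/p}} (f(x_k) - f*)^{1/p}, provided I_k ≠ ∅ and the common-minimizer assumption holds (so ∑_{i∈I_k}(f_i(x_k) - f_i*) = f(x_k) - f*). -/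
/-!
With `q = 1/p` and `S = ∑ i ∈ I, a i`, the power-sum inequalities give
`∑ i ∈ I, a i ^ q ≥ min 1 (#I ^ (1 - q)) * S ^ q`: for `q ≤ 1` because
`a i ^ q ≥ a i * S ^ (q - 1)`, for `q > 1` by Hölder. After dividing by `#I`, the factor
`x⁻¹ * min 1 (x ^ (1 - q))` is antitone on `[1, ∞)`, so `#I ≤ m` lets us replace `#I` by `m`.
-/

open Finset Set

namespace Real

variable {ι : Type*} {s : Finset ι} {f : ι → ℝ} {q : ℝ}

theorem rpow_sum_le_sum_rpow_of_le_one (hs : s.Nonempty) (hf : ∀ i ∈ s, 0 < f i)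
    (hq : q ≤ 1) :
    (∑ i ∈ s, f i) ^ q ≤ ∑ i ∈ s, f i ^ q := by
  have hS : 0 < ∑ i ∈ s, f i := sum_pos hf hs
  have rpow_eq_mul_rpow_sub_one {x : ℝ} (hx : 0 < x) : x ^ q = x * x ^ (q - 1) := by
    rw [rpow_sub_one hx.ne', mul_div_cancel₀ _ hx.ne']
  calc (∑ i ∈ s, f i) ^ q = ∑ i ∈ s, f i * (∑ j ∈ s, f j) ^ (q - 1) := by
        rw [rpow_eq_mul_rpow_sub_one hS, sum_mul]
    _ ≤ ∑ i ∈ s, f i * f i ^ (q - 1) := by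
        refine sum_le_sum fun i hi => mul_le_mul_of_nonneg_left ?_ (hf i hi).le
        exact rpow_le_rpow_of_nonpos (hf i hi) (single_le_sum (fun j hj => (hf j hj).le) hi)
          (by linarith)
    _ = ∑ i ∈ s, f i ^ q := sum_congr rfl fun i hi => (rpow_eq_mul_rpow_sub_one (hf i hi)).symm

theorem min_one_rpow_mul_rpow_sum_le_sum_rpow (hs : s.Nonempty) (hf : ∀ i ∈ s, 0 < f i) :
    min 1 ((#s : ℝ) ^ (1 - q)) * (∑ i ∈ s, f i) ^ q ≤ ∑ i ∈ s, f i ^ q := by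
  have hS : 0 ≤ (∑ i ∈ s, f i) ^ q := rpow_nonneg (sum_nonneg fun i hi => (hf i hi).le) q
  rcases le_or_gt q 1 with hq | hq
  · calc min 1 ((#s : ℝ) ^ (1 - q)) * (∑ i ∈ s, f i) ^ q ≤ (∑ i ∈ s, f i) ^ q :=
          mul_le_of_le_one_left hS (min_le_left _ _)
      _ ≤ ∑ i ∈ s, f i ^ q := rpow_sum_le_sum_rpow_of_le_one hs hf hq
  · have hcard : (0 : ℝ) < #s := by exact_mod_cast hs.card_pos
    calc min 1 ((#s : ℝ) ^ (1 - q)) * (∑ i ∈ s, f i) ^ q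
        ≤ (#s : ℝ) ^ (1 - q) * ((#s : ℝ) ^ (q - 1) * ∑ i ∈ s, f i ^ q) := by
          gcongr
          · exact min_le_right _ _
          · exact rpow_sum_le_const_mul_sum_rpow_of_nonneg s hq.le fun i hi => (hf i hi).le
      _ = ∑ i ∈ s, f i ^ q := by
          rw [← mul_assoc, ← rpow_add hcard, sub_add_sub_cancel', sub_self, rpow_zero, one_mul]

theorem antitoneOn_one_div_mul_min_one_rpow (q : ℝ) :
    AntitoneOn (fun x : ℝ => 1 / x * min 1 (x ^ (1 - q))) (Ici 1) := by
  intro x (hx : 1 ≤ x) y (hy : 1 ≤ y) hxy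
  rcases le_or_gt q 1 with hq | hq
  · simp only [min_eq_left (one_le_rpow hx (sub_nonneg.2 hq)),
      min_eq_left (one_le_rpow hy (sub_nonneg.2 hq)), mul_one]
    exact one_div_le_one_div_of_le (by linarith) hxy
  · have one_div_mul_eq {z : ℝ} (hz : 1 ≤ z) : 1 / z * min 1 (z ^ (1 - q)) = z ^ (-q) := by
      rw [min_eq_right (rpow_le_one_of_one_le_of_nonpos hz (by linarith)), one_div,
        ← rpow_neg_one, ← rpow_add (by linarith), show -1 + (1 - q) = -q by ring]
    simp only [one_div_mul_eq hx, one_div_mul_eq hy]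
    exact rpow_le_rpow_of_nonpos (by linarith) hxy (by linarith)

end Real

theorem stmt14_general (m : ℕ) (p : ℝ)
    (I : Finset (Fin m)) (hI : I.Nonempty) (a : Fin m → ℝ)
    (haI : ∀ i ∈ I, 0 < a i) (haI' : ∀ i ∉ I, a i = 0) :
    (1 / (m : ℝ)) * min 1 ((m : ℝ) ^ (1 - 1 / p)) * (∑ i, a i) ^ (1 / p) ≤
      (1 / (I.card : ℝ)) * ∑ i ∈ I, a i ^ (1 / p) := by
  have hsum : ∑ i, a i = ∑ i ∈ I, a i :=
    (sum_subset (subset_univ I) fun i _ hi => haI' i hi).symm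
  have hcard_pos : (1 : ℝ) ≤ #I := by exact_mod_cast hI.card_pos
  have hcard_le : (#I : ℝ) ≤ m := by
    exact_mod_cast card_le_univ I |>.trans_eq (Fintype.card_fin m)
  rw [hsum]
  calc 1 / (m : ℝ) * min 1 ((m : ℝ) ^ (1 - 1 / p)) * (∑ i ∈ I, a i) ^ (1 / p)
      ≤ 1 / (#I : ℝ) * min 1 ((#I : ℝ) ^ (1 - 1 / p)) * (∑ i ∈ I, a i) ^ (1 / p) := by
        refine mul_le_mul_of_nonneg_right ?_
          (Real.rpow_nonneg (sum_nonneg fun i hi => (haI i hi).le) _)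
        exact Real.antitoneOn_one_div_mul_min_one_rpow _ hcard_pos (hcard_pos.trans hcard_le)
          hcard_le
    _ ≤ 1 / (#I : ℝ) * ∑ i ∈ I, a i ^ (1 / p) := by
        rw [mul_assoc]
        gcongr
        exact Real.min_one_rpow_mul_rpow_sum_le_sum_rpow hI haI

/-- Conditional expectation bound for the randomized choice (key estimate in Lemma 3.8):
the uniform average of `(a i)^(1/p)` over the active index set `I` is bounded below in
terms of `(∑ i, a i)^(1/p)`, where `a i = fᵢ(x_k) - fᵢ*`. -/
theorem stmt14 (m : ℕ) (hm : 0 < m) (p : ℝ) (hp : 0 < p)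
    (I : Finset (Fin m)) (hI : I.Nonempty) (a : Fin m → ℝ)
    (haI : ∀ i ∈ I, 0 < a i) (haI' : ∀ i ∉ I, a i = 0) :
    (1 / (m : ℝ)) * min 1 ((m : ℝ) ^ (1 - 1 / p)) * (∑ i, a i) ^ (1 / p) ≤
      (1 / (I.card : ℝ)) * ∑ i ∈ I, a i ^ (1 / p) :=
  stmt14_general m p I hI a haI haI'
end

section
/- Let {Y_k}, {Z_k}, {W_k} be sequences of nonnegative random variables adapted to a filtration {F_k}, with E[Y_{k+1} | F_k] ≤ Y_k - Z_k + W_k for all k and ∑_{k=0}^∞ W_k < ∞ almost surely. Then ∑_{k=0}^∞ Z_k < ∞ almost surely and {Y_k} converges almost surely to a nonnegative random variable. -/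
/-!
With `S k = Y k + ∑ j < k, (Z j - W j)` the hypothesis says exactly that `S` is a supermartingale.
Stop it at the first `k` with `W 0 + ⋯ + W k > a`: this partial sum is `ℱ k`-measurable, so this
is a stopping time, and the stopped process never sees the increment of `W` that pushes the sum
past `a`; as `Y, Z ≥ 0` it is bounded below by `-a`, hence L¹-bounded and a.s. convergent. On
`{∑ W ≤ a}` it is `S` itself, so `S` converges a.s. Finally `Y ≥ 0` bounds the partial sums
of `Z` by `S + ∑ W`, and then `Y = S - ∑ (Z - W)` converges.
-/

open MeasureTheory Filter Finset Topology

theorem summable_and_tendsto_of_tendsto_add_sum_sub {y z w : ℕ → ℝ} {c : ℝ}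
    (hy : ∀ k, 0 ≤ y k) (hz : ∀ k, 0 ≤ z k) (hw : Summable w)
    (h : Tendsto (fun k => y k + ∑ j ∈ range k, (z j - w j)) atTop (𝓝 c)) :
    Summable z ∧ ∃ l, 0 ≤ l ∧ Tendsto y atTop (𝓝 l) := by
  have hyz : Tendsto (fun k => y k + ∑ j ∈ range k, z j) atTop (𝓝 (c + ∑' j, w j)) :=
    (h.add hw.hasSum.tendsto_sum_nat).congr fun k => by rw [sum_sub_distrib]; ring
  obtain ⟨B, hB⟩ := hyz.bddAbove_range
  have hzs : Summable z := summable_of_sum_range_le hz fun k =>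
    (le_add_of_nonneg_left (hy k)).trans (hB ⟨k, rfl⟩)
  have hyl : Tendsto y atTop (𝓝 (c + ∑' j, w j - ∑' j, z j)) :=
    (hyz.sub hzs.hasSum.tendsto_sum_nat).congr fun k => by ring
  exact ⟨hzs, _, ge_of_tendsto' hyl hy, hyl⟩

namespace MeasureTheory

variable {Ω : Type*} {m0 : MeasurableSpace Ω} {μ : Measure Ω} {ℱ : Filtration ℕ m0}

theorem Adapted.measurable_sum_range {V : ℕ → Ω → ℝ} (hV : Adapted ℱ V) {k n : ℕ}
    (hkn : k ≤ n + 1) : Measurable[ℱ n] fun ω => ∑ j ∈ range k, V j ω :=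
  Finset.measurable_fun_sum _ fun j hj =>
    hV.measurable_le (by rw [mem_range] at hj; omega)

theorem supermartingale_add_sum_of_condExp_le [IsFiniteMeasure μ] {Y V : ℕ → Ω → ℝ}
    (hY : Adapted ℱ Y) (hV : Adapted ℱ V) (hYint : ∀ k, Integrable (Y k) μ)
    (hVint : ∀ k, Integrable (V k) μ)
    (hcond : ∀ k, μ[Y (k + 1) | ℱ k] ≤ᵐ[μ] fun ω => Y k ω - V k ω) :
    Supermartingale (fun k ω => Y k ω + ∑ j ∈ range k, V j ω) ℱ μ := by
  have hsum_int : ∀ k, Integrable (fun ω => ∑ j ∈ range k, V j ω) μ := fun k =>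
    integrable_finsetSum _ fun j _ => hVint j
  refine supermartingale_nat
    (fun k => ((hY k).add (hV.measurable_sum_range k.le_succ)).stronglyMeasurable)
    (fun k => (hYint k).add (hsum_int k)) fun k => ?_
  have hsum : μ[fun ω => ∑ j ∈ range (k + 1), V j ω | ℱ k] =
      fun ω => ∑ j ∈ range (k + 1), V j ω :=
    condExp_of_stronglyMeasurable (ℱ.le k) (hV.measurable_sum_range le_rfl).stronglyMeasurable
      (hsum_int _)
  have hadd : μ[fun ω => Y (k + 1) ω + ∑ j ∈ range (k + 1), V j ω | ℱ k] =ᵐ[μ]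
      μ[Y (k + 1) | ℱ k] + fun ω => ∑ j ∈ range (k + 1), V j ω := by
    rw [← hsum]; exact condExp_add (hYint (k + 1)) (hsum_int (k + 1)) _
  filter_upwards [hadd, hcond k] with ω hadd hle
  rw [hadd, Pi.add_apply, sum_range_succ]
  linarith

theorem Supermartingale.stoppedProcess {f : ℕ → Ω → ℝ} [IsFiniteMeasure μ] {τ : Ω → ℕ∞}
    (hf : Supermartingale f ℱ μ) (hτ : IsStoppingTime ℱ τ) :
    Supermartingale (stoppedProcess f τ) ℱ μ := by
  -- qualified, since inside this declaration `stoppedProcess` resolves to the theorem itself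
  have h : MeasureTheory.stoppedProcess f τ = -(MeasureTheory.stoppedProcess (-f) τ) :=
    funext fun _ => funext fun _ => (neg_neg _).symm
  exact h ▸ (hf.neg.stoppedProcess hτ).neg

theorem Supermartingale.exists_ae_tendsto_of_bddBelow [IsFiniteMeasure μ] {f : ℕ → Ω → ℝ}
    (hf : Supermartingale f ℱ μ) {c : ℝ} (hc : ∀ k, ∀ᵐ ω ∂μ, c ≤ f k ω) :
    ∀ᵐ ω ∂μ, ∃ l, Tendsto (fun k => f k ω) atTop (𝓝 l) := by
  have hbdd : ∀ k, eLpNorm ((-f) k) 1 μ ≤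
      ENNReal.ofReal (∫ ω, f 0 ω ∂μ + μ.real Set.univ * (|c| - c)) := by
    intro k
    have hint : Integrable (fun ω => f k ω + (|c| - c)) μ :=
      (hf.integrable k).add (integrable_const _)
    rw [Pi.neg_apply, eLpNorm_neg, eLpNorm_one_eq_lintegral_enorm,
      ← ofReal_integral_norm_eq_lintegral_enorm (hf.integrable k)]
    refine ENNReal.ofReal_le_ofReal ?_
    calc ∫ ω, ‖f k ω‖ ∂μ ≤ ∫ ω, f k ω + (|c| - c) ∂μ :=
          integral_mono_ae (hf.integrable k).norm hint <| (hc k).mono fun ω hω => by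
            simp only [Real.norm_eq_abs]
            exact abs_le.2 ⟨by linarith [neg_abs_le c], by linarith [le_abs_self c]⟩
      _ = ∫ ω, f k ω ∂μ + μ.real Set.univ * (|c| - c) := by
          rw [integral_add (hf.integrable k) (integrable_const _), integral_const, smul_eq_mul]
      _ ≤ ∫ ω, f 0 ω ∂μ + μ.real Set.univ * (|c| - c) := by
          have := hf.setIntegral_le (Nat.zero_le k) MeasurableSet.univ
          simp only [setIntegral_univ] at this
          linarith
  filter_upwards [hf.neg.exists_ae_tendsto_of_bdd hbdd] with ω ⟨l, hl⟩
  exact ⟨-l, by simpa using hl.neg⟩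

theorem exists_le_stoppedProcess_eq {β : Type*} (u : ℕ → Ω → β) (τ : Ω → ℕ∞) (i : ℕ) (ω : Ω) :
    ∃ n : ℕ, (n : ℕ∞) ≤ τ ω ∧ stoppedProcess u τ i ω = u n ω := by
  by_cases hi : (i : ℕ∞) ≤ τ ω
  · exact ⟨i, hi, stoppedProcess_eq_of_le hi⟩
  · obtain ⟨n, hn⟩ := WithTop.ne_top_iff_exists.1 (ne_top_of_lt (not_le.1 hi))
    refine ⟨n, hn.le, ?_⟩
    rw [stoppedProcess_eq_of_ge (not_le.1 hi).le, ← hn]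
    rfl

noncomputable def partialSumExceedTime (W : ℕ → Ω → ℝ) (a : ℝ) : Ω → ℕ∞ :=
  hittingAfter (fun k ω => ∑ j ∈ range (k + 1), W j ω) (Set.Ioi a) 0

theorem isStoppingTime_partialSumExceedTime {W : ℕ → Ω → ℝ} (hW : Adapted ℱ W) (a : ℝ) :
    IsStoppingTime ℱ (partialSumExceedTime W a) :=
  Adapted.isStoppingTime_hittingAfter (fun _ => hW.measurable_sum_range le_rfl) measurableSet_Ioi

theorem sum_range_le_of_le_partialSumExceedTime {W : ℕ → Ω → ℝ} {a : ℝ} (ha : 0 ≤ a) {ω : Ω}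
    {n : ℕ} (hn : (n : ℕ∞) ≤ partialSumExceedTime W a ω) : ∑ j ∈ range n, W j ω ≤ a := by
  cases n with
  | zero => simpa using ha
  | succ m =>
    have hm : (m : ℕ∞) < partialSumExceedTime W a ω :=
      lt_of_lt_of_le (by exact_mod_cast m.lt_succ_self) hn
    simpa using notMem_of_lt_hittingAfter hm (Nat.zero_le m)

theorem partialSumExceedTime_eq_top {W : ℕ → Ω → ℝ} {a : ℝ} {ω : Ω} (hW : ∀ j, 0 ≤ W j ω)
    (hs : Summable fun j => W j ω) (ha : ∑' j, W j ω ≤ a) : partialSumExceedTime W a ω = ⊤ :=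
  hittingAfter_eq_top_iff.2 fun _ _ => not_lt.2 <|
    (hs.sum_le_tsum _ fun j _ => hW j).trans ha

theorem neg_le_stoppedProcess_partialSumExceedTime {Y Z W : ℕ → Ω → ℝ} {a : ℝ} (ha : 0 ≤ a)
    {ω : Ω} (hY : ∀ k, 0 ≤ Y k ω) (hZ : ∀ k, 0 ≤ Z k ω) (i : ℕ) :
    -a ≤ stoppedProcess (fun k ω => Y k ω + ∑ j ∈ range k, (Z j ω - W j ω))
      (partialSumExceedTime W a) i ω := by
  obtain ⟨n, hn, heq⟩ := exists_le_stoppedProcess_eq _ _ i ω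
  rw [heq, sum_sub_distrib]
  linarith [hY n, sum_nonneg fun j (_ : j ∈ range n) => hZ j,
    sum_range_le_of_le_partialSumExceedTime ha hn]

end MeasureTheory

/-- Supermartingale convergence theorem (Robbins–Siegmund). -/
theorem stmt16 {Ω : Type*} {m0 : MeasurableSpace Ω} (μ : Measure Ω)
    [IsProbabilityMeasure μ] (ℱ : Filtration ℕ m0)
    (Y Z W : ℕ → Ω → ℝ)
    (hYadp : Adapted ℱ Y) (hZadp : Adapted ℱ Z) (hWadp : Adapted ℱ W)
    (hYint : ∀ k, Integrable (Y k) μ) (hZint : ∀ k, Integrable (Z k) μ)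
    (hWint : ∀ k, Integrable (W k) μ)
    (hY0 : ∀ k, 0 ≤ᵐ[μ] Y k) (hZ0 : ∀ k, 0 ≤ᵐ[μ] Z k) (hW0 : ∀ k, 0 ≤ᵐ[μ] W k)
    (hcond : ∀ k, μ[Y (k + 1) | ℱ k] ≤ᵐ[μ] fun ω => Y k ω - Z k ω + W k ω)
    (hWsum : ∀ᵐ ω ∂μ, Summable fun k => W k ω) :
    ∀ᵐ ω ∂μ, (Summable fun k => Z k ω) ∧
      ∃ y : ℝ, 0 ≤ y ∧ Tendsto (fun k => Y k ω) atTop (nhds y) := by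
  set S : ℕ → Ω → ℝ := fun k ω => Y k ω + ∑ j ∈ range k, (Z j ω - W j ω)
  have hS : Supermartingale S ℱ μ :=
    supermartingale_add_sum_of_condExp_le hYadp (hZadp.sub hWadp) hYint
      (fun k => (hZint k).sub (hWint k)) fun k => (hcond k).mono fun ω h => h.trans_eq (by ring)
  have hnonneg : ∀ᵐ ω ∂μ, ∀ k, 0 ≤ Y k ω ∧ 0 ≤ Z k ω ∧ 0 ≤ W k ω := ae_all_iff.2 fun k => by
    filter_upwards [hY0 k, hZ0 k, hW0 k] with ω hY hZ hW
    exact ⟨hY, hZ, hW⟩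
  have hstopped : ∀ a : ℕ, ∀ᵐ ω ∂μ,
      ∃ l, Tendsto (fun k => stoppedProcess S (partialSumExceedTime W a) k ω) atTop (𝓝 l) := by
    intro a
    refine (hS.stoppedProcess (isStoppingTime_partialSumExceedTime hWadp a))
      |>.exists_ae_tendsto_of_bddBelow (c := -a) fun k => ?_
    filter_upwards [hnonneg] with ω hω
    exact neg_le_stoppedProcess_partialSumExceedTime a.cast_nonneg (fun j => (hω j).1)
      (fun j => (hω j).2.1) k
  filter_upwards [hnonneg, ae_all_iff.2 hstopped, hWsum] with ω hω hconv hsum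
  obtain ⟨a, ha⟩ := exists_nat_ge (∑' j, W j ω)
  obtain ⟨l, hl⟩ := hconv a
  have hτ : partialSumExceedTime W a ω = ⊤ :=
    partialSumExceedTime_eq_top (fun j => (hω j).2.2) hsum ha
  simp only [stoppedProcess_eq_of_le (hτ ▸ le_top)] at hl
  exact summable_and_tendsto_of_tendsto_add_sum_sub (fun k => (hω k).1) (fun k => (hω k).2.1)
    hsum hl
end

section
/- Let {x_k} be a sequence of ℝ^n-valued random variables and X* ⊆ ℝ^n. Suppose that for every z ∈ X*, the sequence {‖x_k - z‖} converges almost surely, and that almost surely every cluster point of {x_k} lies in X*. Then {x_k} converges almost surely to an X*-valued random variable. -/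
/-!
On the event where `dist (x k) z` converges for every `z` in a countable dense subset `Z` of `X*`
and all cluster points lie in `X*`, the sequence is bounded, so it has a cluster point `a ∈ X*`.
For `z ∈ Z` near `a`, the limit of `dist (x k) z` must be `dist a z`, which is small; hence
`x k` eventually stays close to `a`. Countability of `Z` keeps this event of full measure, and
the limit is a.e. measurable as an a.e. limit of measurable maps.
-/

open MeasureTheory Filter Topology

section Fejer

variable {ι E : Type*} [MetricSpace E] {l : Filter ι} {u : ι → E}

theorem tendsto_of_mapClusterPt_of_tendsto_dist {Z : Set E} {a : E} (ha : MapClusterPt a l u)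
    (haZ : a ∈ closure Z) (hdist : ∀ z ∈ Z, ∃ c, Tendsto (fun i => dist (u i) z) l (𝓝 c)) :
    Tendsto u l (𝓝 a) := by
  rw [Metric.tendsto_nhds]
  intro ε hε
  obtain ⟨z, hzZ, haz⟩ := Metric.mem_closure_iff.1 haZ (ε / 3) (by positivity)
  obtain ⟨c, hc⟩ := hdist z hzZ
  have hcluster : MapClusterPt (dist a z) l (fun i => dist (u i) z) :=
    ha.tendsto_comp ((continuous_id.dist continuous_const).tendsto a)
  have hc_eq : dist a z = c := eq_of_nhds_neBot (hcluster.clusterPt.mono hc).neBot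
  filter_upwards [hc.eventually (gt_mem_nhds (show c < 2 * ε / 3 by linarith))] with i hi
  calc dist (u i) a ≤ dist (u i) z + dist z a := dist_triangle _ _ _
    _ < ε := by rw [dist_comm z a]; linarith

theorem exists_mapClusterPt_of_tendsto_dist [ProperSpace E] [NeBot l] {z : E} {c : ℝ}
    (h : Tendsto (fun i => dist (u i) z) l (𝓝 c)) : ∃ a, MapClusterPt a l u :=
  let ⟨a, _, ha⟩ := (isCompact_closedBall z (c + 1)).exists_mapClusterPt_of_frequently
    ((h.eventually (gt_mem_nhds (lt_add_one c))).mono fun _ hi => hi.le).frequently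
  ⟨a, ha⟩

theorem exists_tendsto_of_tendsto_dist_of_mapClusterPt_mem [ProperSpace E] [NeBot l]
    {S Z : Set E} (hZ : Z.Nonempty) (hSZ : S ⊆ closure Z)
    (hdist : ∀ z ∈ Z, ∃ c, Tendsto (fun i => dist (u i) z) l (𝓝 c))
    (hcluster : ∀ a, MapClusterPt a l u → a ∈ S) : ∃ a ∈ S, Tendsto u l (𝓝 a) := by
  obtain ⟨z, hz⟩ := hZ
  obtain ⟨c, hc⟩ := hdist z hz
  obtain ⟨a, ha⟩ := exists_mapClusterPt_of_tendsto_dist hc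
  exact ⟨a, hcluster a ha,
    tendsto_of_mapClusterPt_of_tendsto_dist ha (hSZ (hcluster a ha)) hdist⟩

end Fejer

theorem exists_ae_tendsto_of_ae_tendsto_dist {Ω E : Type*} [MeasurableSpace Ω] {μ : Measure Ω}
    [MetricSpace E] [ProperSpace E] [MeasurableSpace E] [BorelSpace E] {x : ℕ → Ω → E}
    (hx : ∀ k, AEMeasurable (x k) μ) {S : Set E} (hS : S.Nonempty)
    (hdist : ∀ z ∈ S, ∀ᵐ ω ∂μ, ∃ c, Tendsto (fun k => dist (x k ω) z) atTop (𝓝 c))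
    (hcluster : ∀ᵐ ω ∂μ, ∀ a, MapClusterPt a atTop (fun k => x k ω) → a ∈ S) :
    ∃ xbar : Ω → E, AEMeasurable xbar μ ∧
      ∀ᵐ ω ∂μ, xbar ω ∈ S ∧ Tendsto (fun k => x k ω) atTop (𝓝 (xbar ω)) := by
  obtain ⟨Z, hZS, hZ_countable, hSZ⟩ :=
    (TopologicalSpace.IsSeparable.of_separableSpace S).exists_countable_dense_subset
  have hZ : Z.Nonempty := closure_nonempty_iff.1 (hS.mono hSZ)
  have hdistZ : ∀ᵐ ω ∂μ, ∀ z ∈ Z, ∃ c, Tendsto (fun k => dist (x k ω) z) atTop (𝓝 c) :=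
    (ae_ball_iff hZ_countable).2 fun z hz => hdist z (hZS hz)
  have : Nonempty E := ⟨hS.some⟩
  have hlim : ∀ᵐ ω ∂μ, limUnder atTop (fun k => x k ω) ∈ S ∧
      Tendsto (fun k => x k ω) atTop (𝓝 (limUnder atTop (fun k => x k ω))) := by
    filter_upwards [hdistZ, hcluster] with ω hdistω hclusterω
    obtain ⟨a, haS, ha⟩ :=
      exists_tendsto_of_tendsto_dist_of_mapClusterPt_mem hZ hSZ hdistω hclusterω
    rw [ha.limUnder_eq]
    exact ⟨haS, ha⟩
  exact ⟨_, aemeasurable_of_tendsto_metrizable_ae' hx (hlim.mono fun _ h => h.2), hlim⟩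

theorem stmt17_general {n : ℕ} {Ω : Type*} [MeasurableSpace Ω] (μ : Measure Ω)
    (x : ℕ → Ω → EuclideanSpace ℝ (Fin n)) (hmeas : ∀ k, Measurable (x k))
    (Xstar : Set (EuclideanSpace ℝ (Fin n))) (hne : Xstar.Nonempty)
    (hfejer : ∀ z ∈ Xstar, ∀ᵐ ω ∂μ,
      ∃ c : ℝ, Tendsto (fun k => ‖x k ω - z‖) atTop (nhds c))
    (hcluster : ∀ᵐ ω ∂μ, ∀ y, MapClusterPt y atTop (fun k => x k ω) → y ∈ Xstar) :
    ∃ xbar : Ω → EuclideanSpace ℝ (Fin n), AEMeasurable xbar μ ∧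
      ∀ᵐ ω ∂μ, xbar ω ∈ Xstar ∧
        Tendsto (fun k => x k ω) atTop (nhds (xbar ω)) := by
  simp_rw [← dist_eq_norm] at hfejer
  exact exists_ae_tendsto_of_ae_tendsto_dist (fun k => (hmeas k).aemeasurable) hne hfejer hcluster

/-- Stochastic Fejér monotonicity: a.s. convergence of the whole sequence. -/
theorem stmt17 {n : ℕ} {Ω : Type*} [MeasurableSpace Ω] (μ : Measure Ω)
    [IsProbabilityMeasure μ]
    (x : ℕ → Ω → EuclideanSpace ℝ (Fin n)) (hmeas : ∀ k, Measurable (x k))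
    (Xstar : Set (EuclideanSpace ℝ (Fin n))) (hne : Xstar.Nonempty)
    (hfejer : ∀ z ∈ Xstar, ∀ᵐ ω ∂μ,
      ∃ c : ℝ, Tendsto (fun k => ‖x k ω - z‖) atTop (nhds c))
    (hcluster : ∀ᵐ ω ∂μ, ∀ y, MapClusterPt y atTop (fun k => x k ω) → y ∈ Xstar) :
    ∃ xbar : Ω → EuclideanSpace ℝ (Fin n), AEMeasurable xbar μ ∧
      ∀ᵐ ω ∂μ, xbar ω ∈ Xstar ∧
        Tendsto (fun k => x k ω) atTop (nhds (xbar ω)) :=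
  stmt17_general μ x hmeas Xstar hne hfejer hcluster
end
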